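/- arXiv:2311.03117 — 2 statements merged into one kernel-verified Lean document; each statement's English description precedes it below -/
import Mathlib

section
/- In an ω-complete cancellable Σ-monoid in which the partial order is ω-complete and sums are suprema of finite partial sums (such as hom-sets of the form Hom(M, I) in the classical model), the countable sum Σ_{i∈I} x_i is defined if and only if the set of finite partial sums {Σ_{i∈I'} x_i : I' ⊆_fin I} is bounded above, and in that case Σ_{i∈I} x_i equals the least upper bound of the finite partial sums. -/
open scoped NNReal

namespace NNReal

variable {ι : Type*} {f : ι → ℝ≥0}

theorem summable_of_sum_le {c : ℝ≥0} (h : ∀ s : Finset ι, ∑ i ∈ s, f i ≤ c) : Summable f :=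
  summable_coe.1 <| _root_.summable_of_sum_le (fun i => (f i).2) fun s => by exact_mod_cast h s

theorem summable_and_tsum_le_iff {c : ℝ≥0} :
    (Summable f ∧ ∑' i, f i ≤ c) ↔ ∀ s : Finset ι, ∑ i ∈ s, f i ≤ c := by
  refine ⟨fun ⟨hf, hle⟩ s => (hf.sum_le_tsum s fun i _ => zero_le).trans hle, fun h => ?_⟩
  have hf := summable_of_sum_le h
  exact ⟨hf, hf.tsum_le_of_sum_le h⟩

theorem tsum_eq_iSup_sum (hf : Summable f) : ∑' i, f i = ⨆ s : Finset ι, ∑ i ∈ s, f i :=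
  (isLUB_hasSum' hf.hasSum).ciSup_eq.symm

end NNReal

theorem sum_defined_iff_bounded_and_eq_lub_general {A : Type}
    (x : ℕ → A → ℝ≥0) :
    (((∀ a, Summable fun i => x i a) ∧ ∀ a, (∑' i, x i a) ≤ 1) ↔
      (∀ (s : Finset ℕ) (a : A), ∑ i ∈ s, x i a ≤ 1)) ∧
    ((∀ (s : Finset ℕ) (a : A), ∑ i ∈ s, x i a ≤ 1) →
      ∀ a, (∑' i, x i a) = ⨆ s : Finset ℕ, ∑ i ∈ s, x i a) := by
  refine ⟨forall_and.symm.trans ((forall_congr' fun a => ?_).trans forall_comm), fun h a => ?_⟩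
  · exact NNReal.summable_and_tsum_le_iff
  · exact NNReal.tsum_eq_iSup_sum (NNReal.summable_of_sum_le fun s => h s a)

/-- In the ω-complete cancellable Σ-monoid of `[0,1]`-valued functions with pointwise
sum (such as hom-sets `Hom(M, I)` in the classical model), a countable sum is defined
iff the finite partial sums are bounded above (i.e. all are ≤ 1, pointwise), and in
that case the sum equals the least upper bound of the finite partial sums. -/
theorem sum_defined_iff_bounded_and_eq_lub {A : Type}
    (x : ℕ → A → ℝ≥0) (hx : ∀ i a, x i a ≤ 1) :
    (((∀ a, Summable fun i => x i a) ∧ ∀ a, (∑' i, x i a) ≤ 1) ↔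
      (∀ (s : Finset ℕ) (a : A), ∑ i ∈ s, x i a ≤ 1)) ∧
    ((∀ (s : Finset ℕ) (a : A), ∑ i ∈ s, x i a ≤ 1) →
      ∀ a, (∑' i, x i a) = ⨆ s : Finset ℕ, ∑ i ∈ s, x i a) :=
  sum_defined_iff_bounded_and_eq_lub_general x
end

section
/- Every linear functional f : M_ℓ(ℂ) → ℂ that is completely positive (equivalently, positive on the PSD cone and mapping self-adjoints to reals) corresponds to a positive semidefinite matrix F with f(A) = tr(FA); moreover, for each n there exist finitely many positive semidefinite matrices x₁,…,x_m ∈ M_n(ℂ) (viewed as maps ℂ → M_n(ℂ)) and positive linear functionals h₁,…,h_m : M_n(ℂ) → ℂ such that the identity map on M_n(ℂ) is dominated by Σᵢ xᵢ·hᵢ, namely Σᵢ hᵢ(A) xᵢ ≥ A for all positive semidefinite A ∈ M_n(ℂ); for n = 2 this holds with m = 4 using the functionals A ↦ a, A ↦ d, A ↦ a+b+c+d, A ↦ a−ib+ic+d for A = [[a,b],[c,d]]. -/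
open scoped ComplexOrder
open Matrix


private lemma outer_posSemidef {n : ℕ} (v : Fin n → ℂ) :
    (vecMulVec v (star v)).PosSemidef := by
  have h := posSemidef_self_mul_conjTranspose (replicateCol (Fin 1) v)
  exact posSemidef_vecMulVec_self_star v

private lemma smul_posSemidef {n : ℕ} {c : ℂ} (hc : 0 ≤ c) {M : Matrix (Fin n) (Fin n) ℂ}
    (hM : M.PosSemidef) : (c • M).PosSemidef := by
  refine PosSemidef.of_dotProduct_mulVec_nonneg ?_ ?_
  · have hcs : star c = c := IsSelfAdjoint.of_nonneg hc
    rw [Matrix.IsHermitian, Matrix.conjTranspose_smul, hcs, hM.1]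
  · intro x
    rw [Matrix.smul_mulVec, dotProduct_smul, smul_eq_mul]
    exact mul_nonneg hc (hM.dotProduct_mulVec_nonneg x)

private lemma complex_nonneg_iff {z : ℂ} : 0 ≤ z ↔ 0 ≤ z.re ∧ z.im = 0 := by
  rw [Complex.le_def]; simp [eq_comm]

private lemma diag_nonneg' {n : ℕ} {A : Matrix (Fin n) (Fin n) ℂ} (hA : A.PosSemidef) (i : Fin n) :
    0 ≤ A i i := by
  have := hA.dotProduct_mulVec_nonneg (Pi.single i 1)
  simpa [Matrix.mulVec_single, dotProduct, Pi.single_apply] using this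

private lemma trace_nonneg' {n : ℕ} {A : Matrix (Fin n) (Fin n) ℂ} (hA : A.PosSemidef) :
    0 ≤ A.trace := by
  exact Finset.sum_nonneg fun i _ => diag_nonneg' hA i

private lemma row_cs {n : ℕ} (b x : Fin n → ℂ) :
    Complex.normSq (∑ j, b j * x j) ≤ (∑ j, Complex.normSq (b j)) * (∑ j, Complex.normSq (x j)) := by
  have h1 : ‖∑ j, b j * x j‖ ≤ ∑ j, ‖b j‖ * ‖x j‖ := by
    refine le_trans (norm_sum_le _ _) ?_
    simp [_root_.map_mul]
  calc Complex.normSq (∑ j, b j * x j) = ‖∑ j, b j * x j‖ ^ 2 := by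
        rw [Complex.sq_norm]
    _ ≤ (∑ j, ‖b j‖ * ‖x j‖) ^ 2 := by
        exact pow_le_pow_left₀ (norm_nonneg _) h1 2
    _ ≤ (∑ j, ‖b j‖ ^ 2) * (∑ j, ‖x j‖ ^ 2) :=
        Finset.sum_mul_sq_le_sq_mul_sq _ _ _
    _ = _ := by simp [Complex.sq_norm]

private lemma trace_smul_one_sub {n : ℕ} {A : Matrix (Fin n) (Fin n) ℂ} (hA : A.PosSemidef) :
    (A.trace • (1 : Matrix (Fin n) (Fin n) ℂ) - A).PosSemidef := by
  have ht : star A.trace = A.trace := by rw [← Matrix.trace_conjTranspose, hA.1]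
  obtain ⟨B, hB⟩ : ∃ B : Matrix (Fin n) (Fin n) ℂ, A = Bᴴ * B := by
    open scoped MatrixOrder in
    obtain ⟨B, hB⟩ := CStarAlgebra.nonneg_iff_eq_star_mul_self.mp hA.nonneg
    exact ⟨B, hB⟩
  refine PosSemidef.of_dotProduct_mulVec_nonneg ?_ ?_
  · show _ = _
    rw [Matrix.conjTranspose_sub, Matrix.conjTranspose_smul, Matrix.conjTranspose_one, hA.1, ht]
  · intro x
    rw [Matrix.sub_mulVec, dotProduct_sub, Matrix.smul_mulVec,
      dotProduct_smul, Matrix.one_mulVec, smul_eq_mul]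
    have hAx : star x ⬝ᵥ A *ᵥ x = star (B *ᵥ x) ⬝ᵥ (B *ᵥ x) := by
      rw [hB, ← mulVec_mulVec, dotProduct_mulVec, vecMul_conjTranspose, star_star]
    have hxx : star x ⬝ᵥ x = ((∑ j, Complex.normSq (x j) : ℝ) : ℂ) := by
      push_cast
      simp [dotProduct, Complex.normSq_eq_conj_mul_self]
    have hyy : star (B *ᵥ x) ⬝ᵥ (B *ᵥ x) = ((∑ k, Complex.normSq ((B *ᵥ x) k) : ℝ) : ℂ) := by
      push_cast
      simp [dotProduct, Complex.normSq_eq_conj_mul_self]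
    have htr : A.trace = ((∑ i, ∑ k, Complex.normSq (B k i) : ℝ) : ℂ) := by
      push_cast
      rw [hB]
      simp [Matrix.trace, Matrix.diag, Matrix.mul_apply, Complex.normSq_eq_conj_mul_self]
    rw [hAx, hxx, hyy, htr, ← Complex.ofReal_mul, ← Complex.ofReal_sub, Complex.zero_le_real,
      sub_nonneg]
    calc (∑ k, Complex.normSq ((B *ᵥ x) k))
        ≤ ∑ k, (∑ j, Complex.normSq (B k j)) * (∑ j, Complex.normSq (x j)) := by
          refine Finset.sum_le_sum fun k _ => ?_
          simpa [Matrix.mulVec, dotProduct] using row_cs (fun j => B k j) x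
      _ = (∑ i, ∑ k, Complex.normSq (B k i)) * (∑ j, Complex.normSq (x j)) := by
          rw [← Finset.sum_mul, Finset.sum_comm]

private lemma part_one (ℓ : ℕ) (f : Matrix (Fin ℓ) (Fin ℓ) ℂ →ₗ[ℂ] ℂ)
    (hf : ∀ A : Matrix (Fin ℓ) (Fin ℓ) ℂ, A.PosSemidef → 0 ≤ f A) :
    ∃ F : Matrix (Fin ℓ) (Fin ℓ) ℂ, F.PosSemidef ∧ ∀ A, f A = (F * A).trace := by
  classical
  set q : (Fin ℓ → ℂ) → ℂ := fun u => f (vecMulVec u (star u)) with hq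
  have hq_nonneg : ∀ u, 0 ≤ q u := fun u => hf _ (outer_posSemidef u)
  have hq_conj : ∀ u, (starRingEnd ℂ) (q u) = q u := fun u => by
    have h := hq_nonneg u
    rw [Complex.le_def] at h
    rw [Complex.conj_eq_iff_im]
    simpa using h.2.symm
  have q_smul : ∀ (c : ℂ) (u : Fin ℓ → ℂ), q (c • u) = (c * (starRingEnd ℂ) c) * q u := by
    intro c u
    have : vecMulVec (c • u) (star (c • u)) = (c * (starRingEnd ℂ) c) • vecMulVec u (star u) := by
      ext r s
      simp [vecMulVec_apply, Pi.smul_apply, Pi.star_apply, smul_eq_mul, Complex.star_def,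
        _root_.map_mul]
      ring
    simp only [hq]
    rw [this, LinearMap.map_smul, smul_eq_mul]
  have pol : ∀ v w : Fin ℓ → ℂ, (4 : ℂ) * f (vecMulVec v (star w)) =
      q (v + w) - q (v - w) + Complex.I * q (v + Complex.I • w)
        - Complex.I * q (v - Complex.I • w) := by
    intro v w
    have hm : (4 : ℂ) • vecMulVec v (star w) =
        vecMulVec (v + w) (star (v + w)) - vecMulVec (v - w) (star (v - w))
          + Complex.I • vecMulVec (v + Complex.I • w) (star (v + Complex.I • w))
          - Complex.I • vecMulVec (v - Complex.I • w) (star (v - Complex.I • w)) := by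
      ext r s
      simp only [Matrix.smul_apply, Matrix.sub_apply, Matrix.add_apply, vecMulVec_apply,
        Pi.add_apply, Pi.sub_apply, Pi.smul_apply, Pi.star_apply, Complex.star_def,
        map_add, map_sub, _root_.map_mul, Complex.conj_I, smul_eq_mul]
      ring_nf
      simp only [Complex.I_sq]
      ring
    have := congrArg f hm
    rw [LinearMap.map_smul, LinearMap.map_sub, LinearMap.map_add, LinearMap.map_sub, LinearMap.map_smul, LinearMap.map_smul] at this
    rw [smul_eq_mul] at this
    rw [this]
    simp only [hq, smul_eq_mul]
  have key : ∀ v w : Fin ℓ → ℂ, (starRingEnd ℂ) (f (vecMulVec w (star v)))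
      = f (vecMulVec v (star w)) := by
    intro v w
    have h1 := pol v w
    have h2 := pol w v
    have e1 : w + v = v + w := add_comm _ _
    have e2 : q (w - v) = q (v - w) := by
      have : w - v = (-1 : ℂ) • (v - w) := by funext i; simp
      rw [this, q_smul]; simp
    have e3 : q (w + Complex.I • v) = q (v - Complex.I • w) := by
      have : w + Complex.I • v = Complex.I • (v - Complex.I • w) := by
        funext i
        simp only [Pi.add_apply, Pi.smul_apply, Pi.sub_apply, smul_eq_mul]
        linear_combination (w i) * Complex.I_mul_I
      rw [this, q_smul]; simp [Complex.conj_I, Complex.I_mul_I]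
    have e4 : q (w - Complex.I • v) = q (v + Complex.I • w) := by
      have : w - Complex.I • v = (-Complex.I) • (v + Complex.I • w) := by
        funext i
        simp only [Pi.add_apply, Pi.smul_apply, Pi.sub_apply, smul_eq_mul, neg_smul,
          Pi.neg_apply, neg_mul]
        linear_combination (w i) * Complex.I_mul_I
      rw [this, q_smul]; simp [Complex.conj_I, Complex.I_mul_I]
    rw [e1, e2, e3, e4] at h2
    have h3 := congrArg (starRingEnd ℂ) h2
    simp only [_root_.map_mul, map_sub, map_add, Complex.conj_I, hq_conj, map_ofNat] at h3
    have h4 : (4 : ℂ) * (starRingEnd ℂ) (f (vecMulVec w (star v)))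
        = (4 : ℂ) * f (vecMulVec v (star w)) := by
      rw [h1]
      linear_combination h3
    have := mul_left_cancel₀ (by norm_num : (4 : ℂ) ≠ 0) h4
    exact this
  set F : Matrix (Fin ℓ) (Fin ℓ) ℂ := Matrix.of fun i k => f (Matrix.single k i 1) with hF
  have std_eq : ∀ k i : Fin ℓ, Matrix.single k i (1 : ℂ) =
      vecMulVec (Pi.single k 1) (star (Pi.single i 1)) := by
    intro k i; ext r s
    simp only [Matrix.single, vecMulVec_apply, Pi.single_apply, Pi.star_apply,
      Matrix.of_apply, Complex.star_def]
    by_cases h1 : k = r <;> by_cases h2 : i = s <;> simp [h1, h2, eq_comm]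
  have f_apply : ∀ A : Matrix (Fin ℓ) (Fin ℓ) ℂ, f A = ∑ k, ∑ i, A k i * F i k := by
    intro A
    conv_lhs => rw [Matrix.matrix_eq_sum_single A]
    rw [map_sum]
    refine Finset.sum_congr rfl fun k _ => ?_
    rw [map_sum]
    refine Finset.sum_congr rfl fun i _ => ?_
    have h1 : Matrix.single k i (A k i) = (A k i) • Matrix.single k i 1 := by
      rw [Matrix.smul_single, smul_eq_mul, mul_one]
    rw [h1, LinearMap.map_smul, smul_eq_mul]
    rfl
  refine ⟨F, PosSemidef.of_dotProduct_mulVec_nonneg ?_ ?_, ?_⟩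
  · ext i k
    rw [Matrix.conjTranspose_apply]
    show star (f (Matrix.single i k 1)) = f (Matrix.single k i 1)
    rw [std_eq, std_eq]
    exact key (Pi.single k 1) (Pi.single i 1)
  · intro x
    have hx : star x ⬝ᵥ F *ᵥ x = f (vecMulVec x (star x)) := by
      rw [f_apply]
      simp only [vecMulVec_apply, Pi.star_apply, dotProduct, Matrix.mulVec, Finset.mul_sum]
      rw [Finset.sum_comm]
      refine Finset.sum_congr rfl fun k _ => Finset.sum_congr rfl fun i _ => ?_
      ring
    rw [hx]; exact hf _ (outer_posSemidef x)
  · intro A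
    rw [f_apply A]
    simp only [Matrix.trace, Matrix.diag, Matrix.mul_apply]
    rw [Finset.sum_comm]
    exact Finset.sum_congr rfl fun k _ => Finset.sum_congr rfl fun i _ => mul_comm _ _

private lemma part_three :
    ∃ x : Fin 4 → Matrix (Fin 2) (Fin 2) ℂ,
      (∀ i, (x i).PosSemidef) ∧
      ∀ A : Matrix (Fin 2) (Fin 2) ℂ, A.PosSemidef →
        ((A 0 0 • x 0 + A 1 1 • x 1 +
            (A 0 0 + A 0 1 + A 1 0 + A 1 1) • x 2 +
            (A 0 0 - Complex.I * A 0 1 + Complex.I * A 1 0 + A 1 1) • x 3) - A).PosSemidef := by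
  have hB0 : (!![(2:ℂ),0;0,1] : Matrix (Fin 2) (Fin 2) ℂ).PosSemidef := by
    have h : (!![(2:ℂ),0;0,1] : Matrix (Fin 2) (Fin 2) ℂ)
        = (!![(1:ℂ),0;1,0;0,1] : Matrix (Fin 3) (Fin 2) ℂ)ᴴ * !![(1:ℂ),0;1,0;0,1] := by
      ext r s
      fin_cases r <;> fin_cases s <;>
        simp [Matrix.mul_apply, Matrix.conjTranspose_apply, Fin.sum_univ_three,
          Matrix.vecHead, Matrix.vecTail] <;> norm_num
    rw [h]; exact posSemidef_conjTranspose_mul_self _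
  have hB1 : (!![(1:ℂ),0;0,2] : Matrix (Fin 2) (Fin 2) ℂ).PosSemidef := by
    have h : (!![(1:ℂ),0;0,2] : Matrix (Fin 2) (Fin 2) ℂ)
        = (!![(1:ℂ),0;0,1;0,1] : Matrix (Fin 3) (Fin 2) ℂ)ᴴ * !![(1:ℂ),0;0,1;0,1] := by
      ext r s
      fin_cases r <;> fin_cases s <;>
        simp [Matrix.mul_apply, Matrix.conjTranspose_apply, Fin.sum_univ_three,
          Matrix.vecHead, Matrix.vecTail] <;> norm_num
    rw [h]; exact posSemidef_conjTranspose_mul_self _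
  have hB2 : (!![(1:ℂ)/2,1/2;1/2,1/2] : Matrix (Fin 2) (Fin 2) ℂ).PosSemidef := by
    have h : (!![(1:ℂ)/2,1/2;1/2,1/2] : Matrix (Fin 2) (Fin 2) ℂ)
        = (!![(1:ℂ)/2,1/2;1/2,1/2] : Matrix (Fin 2) (Fin 2) ℂ)ᴴ * !![(1:ℂ)/2,1/2;1/2,1/2] := by
      ext r s
      fin_cases r <;> fin_cases s <;>
        simp [Matrix.mul_apply, Matrix.conjTranspose_apply, Fin.sum_univ_two, map_ofNat] <;> norm_num
    rw [h]; exact posSemidef_conjTranspose_mul_self _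
  have hB3 : (!![(1:ℂ)/2, Complex.I/2; -Complex.I/2, 1/2] : Matrix (Fin 2) (Fin 2) ℂ).PosSemidef := by
    have h : (!![(1:ℂ)/2, Complex.I/2; -Complex.I/2, 1/2] : Matrix (Fin 2) (Fin 2) ℂ)
        = (!![(1:ℂ)/2, Complex.I/2; 1/2, Complex.I/2] : Matrix (Fin 2) (Fin 2) ℂ)ᴴ
          * !![(1:ℂ)/2, Complex.I/2; 1/2, Complex.I/2] := by
      ext r s
      fin_cases r <;> fin_cases s <;>
        simp [Matrix.mul_apply, Matrix.conjTranspose_apply, Fin.sum_univ_two,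
          Complex.conj_I, map_ofNat] <;> ring_nf <;> simp [Complex.I_sq] <;> ring_nf
    rw [h]; exact posSemidef_conjTranspose_mul_self _
  refine ⟨![!![2,0;0,1], !![1,0;0,2], !![1/2,1/2;1/2,1/2],
      !![1/2, Complex.I/2; -Complex.I/2, 1/2]], ?_, ?_⟩
  · intro i
    fin_cases i
    · exact hB0
    · exact hB1
    · exact hB2
    · exact hB3
  · intro A hA
    have ha := diag_nonneg' hA 0
    have hd := diag_nonneg' hA 1
    have h2 : 0 ≤ A 0 0 + A 0 1 + A 1 0 + A 1 1 := by
      have h := hA.dotProduct_mulVec_nonneg ![1, 1]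
      have e : star ![(1:ℂ), 1] ⬝ᵥ A *ᵥ ![1, 1] = A 0 0 + A 0 1 + A 1 0 + A 1 1 := by
        simp [dotProduct, Matrix.mulVec, Fin.sum_univ_two]
        ring
      rwa [e] at h
    have h3 : 0 ≤ A 0 0 - Complex.I * A 0 1 + Complex.I * A 1 0 + A 1 1 := by
      have h := hA.dotProduct_mulVec_nonneg ![1, -Complex.I]
      have e : star ![(1:ℂ), -Complex.I] ⬝ᵥ A *ᵥ ![1, -Complex.I]
          = A 0 0 - Complex.I * A 0 1 + Complex.I * A 1 0 + A 1 1 := by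
        simp [dotProduct, Matrix.mulVec, Fin.sum_univ_two, Complex.conj_I]
        ring_nf
        simp [Complex.I_sq]
      rwa [e] at h
    show ((A 0 0 • (!![(2:ℂ),0;0,1] : Matrix (Fin 2) (Fin 2) ℂ) + A 1 1 • !![1,0;0,2] +
          (A 0 0 + A 0 1 + A 1 0 + A 1 1) • !![1/2,1/2;1/2,1/2] +
          (A 0 0 - Complex.I * A 0 1 + Complex.I * A 1 0 + A 1 1) •
            !![1/2, Complex.I/2; -Complex.I/2, 1/2]) - A).PosSemidef
    have hG : (A 0 0 • (!![(2:ℂ),0;0,1] : Matrix (Fin 2) (Fin 2) ℂ) + A 1 1 • !![1,0;0,2] +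
          (A 0 0 + A 0 1 + A 1 0 + A 1 1) • !![1/2,1/2;1/2,1/2] +
          (A 0 0 - Complex.I * A 0 1 + Complex.I * A 1 0 + A 1 1) •
            !![1/2, Complex.I/2; -Complex.I/2, 1/2]) - A
        = (A 0 0 + A 1 1) • !![1/2,1/2;1/2,1/2]
          + (A 0 0 + A 1 1) • !![1/2, Complex.I/2; -Complex.I/2, 1/2]
          + ((((A 0 0 + A 0 1 + A 1 0 + A 1 1) +
              (A 0 0 - Complex.I * A 0 1 + Complex.I * A 1 0 + A 1 1)) / 2)
            • (1 : Matrix (Fin 2) (Fin 2) ℂ)) := by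
      ext r s
      fin_cases r <;> fin_cases s <;>
        simp [Matrix.one_apply] <;> ring_nf <;> simp [Complex.I_sq] <;> ring_nf
    rw [hG]
    have hhalf : (0:ℂ) ≤ (((A 0 0 + A 0 1 + A 1 0 + A 1 1) +
        (A 0 0 - Complex.I * A 0 1 + Complex.I * A 1 0 + A 1 1)) / 2) := by
      have hsum := add_nonneg h2 h3
      have heq : (((A 0 0 + A 0 1 + A 1 0 + A 1 1) +
          (A 0 0 - Complex.I * A 0 1 + Complex.I * A 1 0 + A 1 1)) / 2)
          = (2⁻¹ : ℂ) * ((A 0 0 + A 0 1 + A 1 0 + A 1 1) +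
            (A 0 0 - Complex.I * A 0 1 + Complex.I * A 1 0 + A 1 1)) := by ring
      rw [heq]
      refine mul_nonneg ?_ hsum
      rw [complex_nonneg_iff]
      norm_num
    exact ((smul_posSemidef (add_nonneg ha hd) hB2).add
      (smul_posSemidef (add_nonneg ha hd) hB3)).add
      (smul_posSemidef hhalf Matrix.PosSemidef.one)

/-- (i) Every positive linear functional `f : M_ℓ(ℂ) → ℂ` (nonnegative real on the PSD
cone) is represented by a positive semidefinite matrix `F` via `f(A) = tr(F·A)`.
(ii) The identity-covering decomposition: for each `n` there are finitely many PSD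
matrices `x₁,…,x_m` and positive linear functionals `h₁,…,h_m` with
`A ≤ Σᵢ hᵢ(A)·xᵢ` in the Löwner order for all PSD `A`.
(iii) For `n = 2` this holds with `m = 4`, using the functionals
`A ↦ a`, `A ↦ d`, `A ↦ a+b+c+d`, `A ↦ a−ib+ic+d` for `A = [[a,b],[c,d]]`. -/
theorem cpm_functional_representation_and_identity_cover :
    (∀ (ℓ : ℕ) (f : Matrix (Fin ℓ) (Fin ℓ) ℂ →ₗ[ℂ] ℂ),
      (∀ A : Matrix (Fin ℓ) (Fin ℓ) ℂ, A.PosSemidef → 0 ≤ (f A).re ∧ (f A).im = 0) →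
      ∃ F : Matrix (Fin ℓ) (Fin ℓ) ℂ, F.PosSemidef ∧ ∀ A, f A = (F * A).trace) ∧
    (∀ n : ℕ, ∃ (m : ℕ) (x : Fin m → Matrix (Fin n) (Fin n) ℂ)
        (h : Fin m → (Matrix (Fin n) (Fin n) ℂ →ₗ[ℂ] ℂ)),
      (∀ i, (x i).PosSemidef) ∧
      (∀ i (A : Matrix (Fin n) (Fin n) ℂ), A.PosSemidef →
        0 ≤ (h i A).re ∧ (h i A).im = 0) ∧
      (∀ A : Matrix (Fin n) (Fin n) ℂ, A.PosSemidef →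
        ((∑ i, h i A • x i) - A).PosSemidef)) ∧
    (∃ x : Fin 4 → Matrix (Fin 2) (Fin 2) ℂ,
      (∀ i, (x i).PosSemidef) ∧
      ∀ A : Matrix (Fin 2) (Fin 2) ℂ, A.PosSemidef →
        ((A 0 0 • x 0 + A 1 1 • x 1 +
            (A 0 0 + A 0 1 + A 1 0 + A 1 1) • x 2 +
            (A 0 0 - Complex.I * A 0 1 + Complex.I * A 1 0 + A 1 1) • x 3) - A).PosSemidef) := by
  refine ⟨?_, ?_, part_three⟩
  · intro ℓ f hf
    exact part_one ℓ f fun A hA => complex_nonneg_iff.mpr (hf A hA)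
  · intro n
    refine ⟨1, fun _ => 1, fun _ => Matrix.traceLinearMap (Fin n) ℂ ℂ, fun _ => Matrix.PosSemidef.one,
      fun _ A hA => complex_nonneg_iff.mp (trace_nonneg' hA), fun A hA => ?_⟩
    have : (∑ i : Fin 1, (Matrix.traceLinearMap (Fin n) ℂ ℂ) A • (1 : Matrix (Fin n) (Fin n) ℂ))
        = A.trace • (1 : Matrix (Fin n) (Fin n) ℂ) := by
      simp [Matrix.traceLinearMap]
    rw [this]
    exact trace_smul_one_sub hA
end
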